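/- arXiv:1511.09100 — 7 statements merged into one kernel-verified Lean document; each statement's English description precedes it below -/
import Mathlib

section
/- Let u : ℝ² → ℂ be twice continuously differentiable and for λ ∈ ℂ* define U_λ = (1/2)·[[-i u_y, i λ⁻¹ e^u + i e^{-u}], [i λ e^u + i e^{-u}, i u_y]] and V_λ = (1/2)·[[i u_x, -λ⁻¹ e^u + e^{-u}], [λ e^u - e^{-u}, -i u_x]]. Then the zero-curvature condition ∂_y U_λ - ∂_x V_λ - [U_λ, V_λ] = 0 holds for all λ ∈ ℂ* if and only if u satisfies the sinh-Gordon equation Δu + 2 sinh(2u) = 0. -/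
open Complex Matrix

attribute [local instance] Matrix.normedAddCommGroup Matrix.normedSpace

noncomputable section

/-- partial derivative in the x-direction -/
def px (u : ℝ × ℝ → ℂ) (p : ℝ × ℝ) : ℂ := fderiv ℝ u p (1, 0)

/-- partial derivative in the y-direction -/
def py (u : ℝ × ℝ → ℂ) (p : ℝ × ℝ) : ℂ := fderiv ℝ u p (0, 1)

/-- matrix-valued partial derivative in the x-direction -/
def pxM (A : ℝ × ℝ → Matrix (Fin 2) (Fin 2) ℂ) (p : ℝ × ℝ) : Matrix (Fin 2) (Fin 2) ℂ :=
  fderiv ℝ A p (1, 0)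

/-- matrix-valued partial derivative in the y-direction -/
def pyM (A : ℝ × ℝ → Matrix (Fin 2) (Fin 2) ℂ) (p : ℝ × ℝ) : Matrix (Fin 2) (Fin 2) ℂ :=
  fderiv ℝ A p (0, 1)

/-- Euclidean Laplacian -/
def lap (u : ℝ × ℝ → ℂ) (p : ℝ × ℝ) : ℂ := px (px u) p + py (py u) p

def Umat (u : ℝ × ℝ → ℂ) (l : ℂ) (p : ℝ × ℝ) : Matrix (Fin 2) (Fin 2) ℂ :=
  (1/2 : ℂ) •
    !![-I * py u p, I * l⁻¹ * exp (u p) + I * exp (-u p);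
       I * l * exp (u p) + I * exp (-u p), I * py u p]

def Vmat (u : ℝ × ℝ → ℂ) (l : ℂ) (p : ℝ × ℝ) : Matrix (Fin 2) (Fin 2) ℂ :=
  (1/2 : ℂ) •
    !![I * px u p, -l⁻¹ * exp (u p) + exp (-u p);
       l * exp (u p) - exp (-u p), -I * px u p]

/-- derivative of `exp ∘ u`. -/
theorem hasF_exp {u : ℝ × ℝ → ℂ} {p : ℝ × ℝ} (hu : DifferentiableAt ℝ u p) :
    HasFDerivAt (fun q => Complex.exp (u q)) (Complex.exp (u p) • fderiv ℝ u p) p := by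
  have h := ((Complex.hasDerivAt_exp (u p)).hasFDerivAt.restrictScalars ℝ).comp p hu.hasFDerivAt
  have heq : (ContinuousLinearMap.restrictScalars ℝ
      (ContinuousLinearMap.toSpanSingleton ℂ (cexp (u p)))).comp (fderiv ℝ u p)
      = cexp (u p) • fderiv ℝ u p := by
    apply ContinuousLinearMap.ext; intro v; simp [mul_comm]
  rw [heq] at h
  exact h

/-- every matrix entry we consider has this master form; its derivative. -/
theorem entry_hasFDerivAt {u : ℝ × ℝ → ℂ} (hu : ContDiff ℝ 2 u) (a b c d : ℂ) (p : ℝ × ℝ) :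
    HasFDerivAt (fun q => a * px u q + b * py u q + c * cexp (u q) + d * cexp (-u q))
      (a • fderiv ℝ (px u) p + b • fderiv ℝ (py u) p
        + ((c * cexp (u p)) • fderiv ℝ u p + (-(d * cexp (-u p))) • fderiv ℝ u p)) p := by
  have hud : Differentiable ℝ u := hu.differentiable two_ne_zero
  have h1 : Differentiable ℝ (fun q => fderiv ℝ u q) :=
    (hu.fderiv_right (m := 1) (by norm_num)).differentiable one_ne_zero
  have hpx : Differentiable ℝ (px u) :=
    (ContinuousLinearMap.apply ℝ ℂ ((1:ℝ), (0:ℝ))).differentiable.comp h1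
  have hpy : Differentiable ℝ (py u) :=
    (ContinuousLinearMap.apply ℝ ℂ ((0:ℝ), (1:ℝ))).differentiable.comp h1
  have HE : HasFDerivAt (fun q => cexp (u q)) (cexp (u p) • fderiv ℝ u p) p := hasF_exp (hud p)
  have HF : HasFDerivAt (fun q => cexp (-u q)) ((-cexp (-u p)) • fderiv ℝ u p) p := by
    have h := hasF_exp (u := fun q => -u q) ((hud p).neg)
    rw [fderiv_fun_neg] at h
    rw [smul_neg, ← neg_smul] at h
    exact h
  have H := ((((hpx p).hasFDerivAt.const_mul a).add ((hpy p).hasFDerivAt.const_mul b)).add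
    ((HE.const_mul c).add (HF.const_mul d)))
  have hfun : (fun q => a * px u q + b * py u q + c * cexp (u q) + d * cexp (-u q))
      = (((fun y => a * px u y) + fun y => b * py u y)
          + ((fun y => c * cexp (u y)) + fun y => d * cexp (-u y))) := by
    funext q; simp only [Pi.add_apply]; ring
  rw [hfun]
  refine H.congr_fderiv ?_
  module

theorem entry_fderiv_apply {u : ℝ × ℝ → ℂ} (hu : ContDiff ℝ 2 u) (a b c d : ℂ)
    (p : ℝ × ℝ) (v : ℝ × ℝ) :
    fderiv ℝ (fun q => a * px u q + b * py u q + c * cexp (u q) + d * cexp (-u q)) p v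
      = a * fderiv ℝ (px u) p v + b * fderiv ℝ (py u) p v
        + (c * cexp (u p) - d * cexp (-u p)) * fderiv ℝ u p v := by
  rw [(entry_hasFDerivAt hu a b c d p).fderiv]
  simp only [ContinuousLinearMap.add_apply, ContinuousLinearMap.coe_smul', Pi.smul_apply,
    smul_eq_mul]
  ring

theorem entry_diffAt {u : ℝ × ℝ → ℂ} (hu : ContDiff ℝ 2 u) (a b c d : ℂ) (p : ℝ × ℝ) :
    DifferentiableAt ℝ (fun q => a * px u q + b * py u q + c * cexp (u q) + d * cexp (-u q)) p :=
  (entry_hasFDerivAt hu a b c d p).differentiableAt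

/-- evaluation of the fderiv of a matrix-valued function entrywise. -/
theorem fderiv_entry_apply (A : ℝ × ℝ → Matrix (Fin 2) (Fin 2) ℂ) (p : ℝ × ℝ)
    (hA : ∀ i j, DifferentiableAt ℝ (fun q => A q i j) p) (v : ℝ × ℝ) (i j : Fin 2) :
    fderiv ℝ A p v i j = fderiv ℝ (fun q => A q i j) p v := by
  have hd : DifferentiableAt ℝ A p :=
    differentiableAt_pi.2 fun i => differentiableAt_pi.2 fun j => hA i j
  let e : (Fin 2 → Fin 2 → ℂ) →L[ℝ] ℂ :=
    (ContinuousLinearMap.proj (R := ℝ) (φ := fun _ : Fin 2 => ℂ) j).comp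
      (ContinuousLinearMap.proj (R := ℝ) (φ := fun _ : Fin 2 => Fin 2 → ℂ) i)
  have h := (e.hasFDerivAt.comp p hd.hasFDerivAt).fderiv
  have : fderiv ℝ (fun q => A q i j) p v = e (fderiv ℝ A p v) := by
    rw [show (fun q => A q i j) = (e ∘ A) from rfl, h]; rfl
  rw [this]; rfl

set_option maxHeartbeats 1600000 in
theorem key_matrix (u : ℝ × ℝ → ℂ) (hu : ContDiff ℝ 2 u) (l : ℂ) (hl : l ≠ 0) (p : ℝ × ℝ) :
    pyM (Umat u l) p - pxM (Vmat u l) p -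
        (Umat u l p * Vmat u l p - Vmat u l p * Umat u l p)
      = !![-(I/2) * (lap u p + 2 * Complex.sinh (2 * u p)), 0;
           0, (I/2) * (lap u p + 2 * Complex.sinh (2 * u p))] := by
  have hU00 : (fun q => Umat u l q 0 0)
      = fun q => (0:ℂ) * px u q + (-(I/2)) * py u q + 0 * cexp (u q) + 0 * cexp (-u q) := by
    funext q; simp [Umat]; ring
  have hU01 : (fun q => Umat u l q 0 1)
      = fun q => (0:ℂ) * px u q + 0 * py u q + (I * l⁻¹/2) * cexp (u q) + (I/2) * cexp (-u q) := by
    funext q; simp [Umat]; ring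
  have hU10 : (fun q => Umat u l q 1 0)
      = fun q => (0:ℂ) * px u q + 0 * py u q + (I * l/2) * cexp (u q) + (I/2) * cexp (-u q) := by
    funext q; simp [Umat]; ring
  have hU11 : (fun q => Umat u l q 1 1)
      = fun q => (0:ℂ) * px u q + (I/2) * py u q + 0 * cexp (u q) + 0 * cexp (-u q) := by
    funext q; simp [Umat]; ring
  have hV00 : (fun q => Vmat u l q 0 0)
      = fun q => (I/2 : ℂ) * px u q + 0 * py u q + 0 * cexp (u q) + 0 * cexp (-u q) := by
    funext q; simp [Vmat]; ring
  have hV01 : (fun q => Vmat u l q 0 1)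
      = fun q => (0:ℂ) * px u q + 0 * py u q + (-l⁻¹/2) * cexp (u q) + (1/2) * cexp (-u q) := by
    funext q; simp [Vmat]; ring
  have hV10 : (fun q => Vmat u l q 1 0)
      = fun q => (0:ℂ) * px u q + 0 * py u q + (l/2) * cexp (u q) + (-(1/2)) * cexp (-u q) := by
    funext q; simp [Vmat]; ring
  have hV11 : (fun q => Vmat u l q 1 1)
      = fun q => (-(I/2) : ℂ) * px u q + 0 * py u q + 0 * cexp (u q) + 0 * cexp (-u q) := by
    funext q; simp [Vmat]; ring
  have master : ∀ (g : ℝ × ℝ → ℂ) (a b c d : ℂ),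
      g = (fun q => a * px u q + b * py u q + c * cexp (u q) + d * cexp (-u q)) →
      DifferentiableAt ℝ g p := by
    rintro g a b c d rfl; exact entry_diffAt hu _ _ _ _ p
  have hUd : ∀ i j, DifferentiableAt ℝ (fun q => Umat u l q i j) p := by
    intro i j
    fin_cases i <;> fin_cases j
    exacts [master _ _ _ _ _ hU00, master _ _ _ _ _ hU01,
      master _ _ _ _ _ hU10, master _ _ _ _ _ hU11]
  have hVd : ∀ i j, DifferentiableAt ℝ (fun q => Vmat u l q i j) p := by
    intro i j
    fin_cases i <;> fin_cases j
    exacts [master _ _ _ _ _ hV00, master _ _ _ _ _ hV01,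
      master _ _ _ _ _ hV10, master _ _ _ _ _ hV11]
  have hexp : cexp (u p) * cexp (-u p) = 1 := by
    rw [← Complex.exp_add]; simp
  have hsinh : (2:ℂ) * Complex.sinh (2 * u p) = cexp (u p) ^ 2 - cexp (-u p) ^ 2 := by
    rw [Complex.sinh]
    rw [show (2:ℂ) * u p = u p + u p by ring, Complex.exp_add,
      show -(u p + u p) = -u p + -u p by ring, Complex.exp_add]
    ring
  have hs2 : Complex.sinh (2 * u p) = (cexp (u p) ^ 2 - cexp (-u p) ^ 2) / 2 := by
    linear_combination hsinh / 2
  ext i j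
  fin_cases i <;> fin_cases j
  · simp only [Fin.zero_eta, Fin.mk_one, pyM, pxM, Matrix.sub_apply,
      fderiv_entry_apply _ p hUd, fderiv_entry_apply _ p hVd]
    rw [hU00, hV00, entry_fderiv_apply hu, entry_fderiv_apply hu]
    simp only [Umat, Vmat, Matrix.mul_apply, Fin.sum_univ_two, Matrix.smul_apply, smul_eq_mul,
      Matrix.cons_val', Matrix.cons_val_zero, Matrix.cons_val_one, Matrix.head_cons,
      Matrix.empty_val', Matrix.cons_val_fin_one, Matrix.head_fin_const, Matrix.of_apply,
      Matrix.cons_val_zero, lap, px, py]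
    rw [hs2, Complex.exp_neg]
    field_simp [hl, Complex.exp_ne_zero]
    try ring
    try (field_simp [hl, Complex.exp_ne_zero]; try ring)
    try (simp only [Complex.I_sq]; ring)
  · simp only [Fin.zero_eta, Fin.mk_one, pyM, pxM, Matrix.sub_apply,
      fderiv_entry_apply _ p hUd, fderiv_entry_apply _ p hVd]
    rw [hU01, hV01, entry_fderiv_apply hu, entry_fderiv_apply hu]
    simp only [Umat, Vmat, Matrix.mul_apply, Fin.sum_univ_two, Matrix.smul_apply, smul_eq_mul,
      Matrix.cons_val', Matrix.cons_val_zero, Matrix.cons_val_one, Matrix.head_cons,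
      Matrix.empty_val', Matrix.cons_val_fin_one, Matrix.head_fin_const, Matrix.of_apply, px, py]
    rw [Complex.exp_neg]
    field_simp [hl, Complex.exp_ne_zero]
    try ring
    try (field_simp [hl, Complex.exp_ne_zero]; try ring)
    try (simp only [Complex.I_sq]; ring)
  · simp only [Fin.zero_eta, Fin.mk_one, pyM, pxM, Matrix.sub_apply,
      fderiv_entry_apply _ p hUd, fderiv_entry_apply _ p hVd]
    rw [hU10, hV10, entry_fderiv_apply hu, entry_fderiv_apply hu]
    simp only [Umat, Vmat, Matrix.mul_apply, Fin.sum_univ_two, Matrix.smul_apply, smul_eq_mul,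
      Matrix.cons_val', Matrix.cons_val_zero, Matrix.cons_val_one, Matrix.head_cons,
      Matrix.empty_val', Matrix.cons_val_fin_one, Matrix.head_fin_const, Matrix.of_apply, px, py]
    rw [Complex.exp_neg]
    field_simp [hl, Complex.exp_ne_zero]
    try ring
    try (field_simp [hl, Complex.exp_ne_zero]; try ring)
    try (simp only [Complex.I_sq]; ring)
  · simp only [Fin.zero_eta, Fin.mk_one, pyM, pxM, Matrix.sub_apply,
      fderiv_entry_apply _ p hUd, fderiv_entry_apply _ p hVd]
    rw [hU11, hV11, entry_fderiv_apply hu, entry_fderiv_apply hu]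
    simp only [Umat, Vmat, Matrix.mul_apply, Fin.sum_univ_two, Matrix.smul_apply, smul_eq_mul,
      Matrix.cons_val', Matrix.cons_val_zero, Matrix.cons_val_one, Matrix.head_cons,
      Matrix.empty_val', Matrix.cons_val_fin_one, Matrix.head_fin_const, Matrix.of_apply,
      lap, px, py]
    rw [hs2, Complex.exp_neg]
    field_simp [hl, Complex.exp_ne_zero]
    try ring
    try (field_simp [hl, Complex.exp_ne_zero]; try ring)
    try (simp only [Complex.I_sq]; ring)

/-- For a twice continuously differentiable `u : ℝ² → ℂ`, the
zero-curvature condition `∂_y U_λ - ∂_x V_λ - [U_λ, V_λ] = 0` holds for all `λ ∈ ℂ*`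
iff `u` solves the sinh-Gordon equation `Δu + 2 sinh (2u) = 0`. -/
theorem zero_curvature_iff_sinhGordon (u : ℝ × ℝ → ℂ) (hu : ContDiff ℝ 2 u) :
    (∀ l : ℂ, l ≠ 0 → ∀ p : ℝ × ℝ,
        pyM (Umat u l) p - pxM (Vmat u l) p -
          (Umat u l p * Vmat u l p - Vmat u l p * Umat u l p) = 0) ↔
      (∀ p : ℝ × ℝ, lap u p + 2 * Complex.sinh (2 * u p) = 0) := by
  constructor
  · intro H p
    have h := H 1 one_ne_zero p
    rw [key_matrix u hu 1 one_ne_zero p] at h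
    have h00 := congrFun (congrFun h 0) 0
    simp only [Matrix.cons_val_zero, Matrix.zero_apply, Matrix.cons_val',
      Matrix.empty_val', Matrix.cons_val_fin_one] at h00
    have hI : (-(I/2) : ℂ) ≠ 0 := by simp [Complex.I_ne_zero]
    exact (mul_eq_zero.1 h00).resolve_left hI
  · intro H l hl p
    rw [key_matrix u hu l hl p, H p]
    ext i j
    fin_cases i <;> fin_cases j <;> simp

end
end

section
/- With φ, ψ, ω as in the Lax-pair ODEs for sinh-Gordon and λ_i ≠ λ_j, d/dx [ (i/(λ_i - λ_j))·(4λ_j(ψ₁φ₂)(λ_i)(ψ₂φ₁)(λ_j) + (λ_i+λ_j)ω(λ_i)ω(λ_j) + 4λ_i(ψ₂φ₁)(λ_i)(ψ₁φ₂)(λ_j)) ] = ω(λ_i)·∂_y ω(λ_j) - ω(λ_j)·∂_y ω(λ_i), where ∂_y ω(λ) = (λ e^u - e^{-u})φ₁ψ₂(λ) + (λ⁻¹ e^u - e^{-u})ψ₁φ₂(λ). -/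
set_option maxHeartbeats 2000000
open Complex

/-- Antiderivative identity for `ω(λᵢ)∂_yω(λⱼ) - ω(λⱼ)∂_yω(λᵢ)`,
where `φ(λ)` solves \eqref{eq_ode_phi}, `ψ(λ)` solves \eqref{eq_ode_psi},
`ω(λ) = ψ₁(λ)φ₁(λ) - ψ₂(λ)φ₂(λ)` and
`∂_yω(λ) = (λe^u - e^{-u})φ₁ψ₂(λ) + (λ⁻¹e^u - e^{-u})ψ₁φ₂(λ)`. -/
theorem antiderivative_bb (u uy : ℝ → ℂ) (hu : Continuous u) (huy : Continuous uy)
    (li lj : ℂ) (hli : li ≠ 0) (hlj : lj ≠ 0) (hij : li ≠ lj)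
    (p1 q1 p2 q2 r1 s1 r2 s2 : ℝ → ℂ)
    -- φ(λᵢ) = (p1, q1), ψ(λᵢ) = (r1, s1) at λ = λᵢ
    (hp1 : ∀ x, HasDerivAt p1
      (-(1/2) * ((-I * uy x) * p1 x + (I * li⁻¹ * exp (u x) + I * exp (-u x)) * q1 x)) x)
    (hq1 : ∀ x, HasDerivAt q1
      (-(1/2) * ((I * li * exp (u x) + I * exp (-u x)) * p1 x + (I * uy x) * q1 x)) x)
    (hr1 : ∀ x, HasDerivAt r1
      ((1/2) * ((-I * uy x) * r1 x + (I * li * exp (u x) + I * exp (-u x)) * s1 x)) x)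
    (hs1 : ∀ x, HasDerivAt s1
      ((1/2) * ((I * li⁻¹ * exp (u x) + I * exp (-u x)) * r1 x + (I * uy x) * s1 x)) x)
    -- φ(λⱼ) = (p2, q2), ψ(λⱼ) = (r2, s2) at λ = λⱼ
    (hp2 : ∀ x, HasDerivAt p2
      (-(1/2) * ((-I * uy x) * p2 x + (I * lj⁻¹ * exp (u x) + I * exp (-u x)) * q2 x)) x)
    (hq2 : ∀ x, HasDerivAt q2
      (-(1/2) * ((I * lj * exp (u x) + I * exp (-u x)) * p2 x + (I * uy x) * q2 x)) x)
    (hr2 : ∀ x, HasDerivAt r2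
      ((1/2) * ((-I * uy x) * r2 x + (I * lj * exp (u x) + I * exp (-u x)) * s2 x)) x)
    (hs2 : ∀ x, HasDerivAt s2
      ((1/2) * ((I * lj⁻¹ * exp (u x) + I * exp (-u x)) * r2 x + (I * uy x) * s2 x)) x)
    (omi omj Dyomi Dyomj : ℝ → ℂ)
    (homi : omi = fun x => r1 x * p1 x - s1 x * q1 x)
    (homj : omj = fun x => r2 x * p2 x - s2 x * q2 x)
    (hDyomi : Dyomi = fun x => (li * exp (u x) - exp (-u x)) * p1 x * s1 x +
      (li⁻¹ * exp (u x) - exp (-u x)) * r1 x * q1 x)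
    (hDyomj : Dyomj = fun x => (lj * exp (u x) - exp (-u x)) * p2 x * s2 x +
      (lj⁻¹ * exp (u x) - exp (-u x)) * r2 x * q2 x) :
    ∀ x, HasDerivAt (fun x =>
        (I / (li - lj)) *
          (4 * lj * (r1 x * q1 x) * (s2 x * p2 x) + (li + lj) * omi x * omj x +
            4 * li * (s1 x * p1 x) * (r2 x * q2 x)))
      (omi x * Dyomj x - omj x * Dyomi x) x := by
  intro x
  subst homi homj hDyomi hDyomj
  have hij' : li - lj ≠ 0 := sub_ne_zero.mpr hij
  have A := ((((hr1 x).mul (hq1 x)).const_mul (4*lj)).mul ((hs2 x).mul (hp2 x)))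
  have B := ((((hr1 x).mul (hp1 x)).sub ((hs1 x).mul (hq1 x))).const_mul (li+lj)).mul
    (((hr2 x).mul (hp2 x)).sub ((hs2 x).mul (hq2 x)))
  have C := ((((hs1 x).mul (hp1 x)).const_mul (4*li)).mul ((hr2 x).mul (hq2 x)))
  have H := ((A.add B).add C).const_mul (I/(li-lj))
  convert H using 1
  case e'_4 => rfl
  case e'_8 => rfl
  have h1 : li * li⁻¹ = 1 := mul_inv_cancel₀ hli
  have h2 : lj * lj⁻¹ = 1 := mul_inv_cancel₀ hlj
  have h3 : I * I = -1 := I_mul_I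
  simp only [Pi.mul_apply, Pi.sub_apply]
  rw [div_mul_eq_mul_div, eq_div_iff hij']
  linear_combination (((-2):ℂ) * (Complex.exp (u x)) * (q1 x) * (s1 x) * (q2 x) * (r2 x) + (2:ℂ) * (Complex.exp (u x)) * (q1 x) * (r1 x) * (q2 x) * (s2 x) + ((-2):ℂ) * (Complex.exp (u x)) * (q1 x) * (r1 x) * (p2 x) * (r2 x) + (2:ℂ) * (Complex.exp (u x)) * (p1 x) * (r1 x) * (q2 x) * (r2 x)) * h1 + ((2:ℂ) * (Complex.exp (u x)) * (q1 x) * (s1 x) * (q2 x) * (r2 x) + ((-2):ℂ) * (Complex.exp (u x)) * (q1 x) * (r1 x) * (q2 x) * (s2 x) + (2:ℂ) * (Complex.exp (u x)) * (q1 x) * (r1 x) * (p2 x) * (r2 x) + ((-2):ℂ) * (Complex.exp (u x)) * (p1 x) * (r1 x) * (q2 x) * (r2 x)) * h2 + (((-1):ℂ) * lj * (Complex.exp (-u x)) * (q1 x) * (s1 x) * (q2 x) * (r2 x) + ((-1):ℂ) * lj * (Complex.exp (-u x)) * (q1 x) * (s1 x) * (p2 x) * (s2 x) + (1:ℂ)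 * lj * (Complex.exp (-u x)) * (q1 x) * (r1 x) * (q2 x) * (s2 x) + ((-1):ℂ) * lj * (Complex.exp (-u x)) * (q1 x) * (r1 x) * (p2 x) * (r2 x) + (1:ℂ) * lj * (Complex.exp (-u x)) * (p1 x) * (s1 x) * (q2 x) * (s2 x) + ((-1):ℂ) * lj * (Complex.exp (-u x)) * (p1 x) * (s1 x) * (p2 x) * (r2 x) + (1:ℂ) * lj * (Complex.exp (-u x)) * (p1 x) * (r1 x) * (q2 x) * (r2 x) + (1:ℂ) * lj * (Complex.exp (-u x)) * (p1 x) * (r1 x) * (p2 x) * (s2 x) + ((-1):ℂ) * lj * (lj⁻¹) * (Complex.exp (u x)) * (q1 x) * (s1 x) * (q2 x) * (r2 x) + (2:ℂ) * lj * (lj⁻¹) * (Complex.exp (u x)) * (q1 x) * (r1 x) * (q2 x) * (s2 x) + ((-2):ℂ) * lj * (lj⁻¹) * (Complex.exp (u x)) * (q1 x) * (r1 x) * (p2 x) * (r2 x) + (1:ℂ) * lj * (lj⁻¹) * (Complex.exp (u x)) * (p1 x) * (r1 x) * (q2 x) * (r2 x) + ((-1):ℂ) * lj * (li⁻¹) *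 (Complex.exp (u x)) * (q1 x) * (r1 x) * (q2 x) * (s2 x) + (1:ℂ) * lj * (li⁻¹) * (Complex.exp (u x)) * (q1 x) * (r1 x) * (p2 x) * (r2 x) + (1:ℂ) * lj * lj * (Complex.exp (u x)) * (q1 x) * (s1 x) * (p2 x) * (s2 x) + ((-1):ℂ) * lj * lj * (Complex.exp (u x)) * (p1 x) * (r1 x) * (p2 x) * (s2 x) + (1:ℂ) * li * (Complex.exp (-u x)) * (q1 x) * (s1 x) * (q2 x) * (r2 x) + (1:ℂ) * li * (Complex.exp (-u x)) * (q1 x) * (s1 x) * (p2 x) * (s2 x) + ((-1):ℂ) * li * (Complex.exp (-u x)) * (q1 x) * (r1 x) * (q2 x) * (s2 x) + (1:ℂ) * li * (Complex.exp (-u x)) * (q1 x) * (r1 x) * (p2 x) * (r2 x) + ((-1):ℂ) * li * (Complex.exp (-u x)) * (p1 x) * (s1 x) * (q2 x) * (s2 x) + (1:ℂ) * li * (Complex.exp (-u x)) * (p1 x) * (s1 x) * (p2 x) * (r2 x) + ((-1):ℂ) * li * (Complex.exp (-u x)) * (p1 x) * (r1 x) * (q2 x) * (r2 x) + ((-1):ℂ)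 * li * (Complex.exp (-u x)) * (p1 x) * (r1 x) * (p2 x) * (s2 x) + ((-1):ℂ) * li * (lj⁻¹) * (Complex.exp (u x)) * (q1 x) * (s1 x) * (q2 x) * (r2 x) + (1:ℂ) * li * (lj⁻¹) * (Complex.exp (u x)) * (p1 x) * (r1 x) * (q2 x) * (r2 x) + (2:ℂ) * li * (li⁻¹) * (Complex.exp (u x)) * (q1 x) * (s1 x) * (q2 x) * (r2 x) + ((-1):ℂ) * li * (li⁻¹) * (Complex.exp (u x)) * (q1 x) * (r1 x) * (q2 x) * (s2 x) + (1:ℂ) * li * (li⁻¹) * (Complex.exp (u x)) * (q1 x) * (r1 x) * (p2 x) * (r2 x) + ((-2):ℂ) * li * (li⁻¹) * (Complex.exp (u x)) * (p1 x) * (r1 x) * (q2 x) * (r2 x) + ((-1):ℂ) * li * lj * (Complex.exp (u x)) * (q1 x) * (s1 x) * (p2 x) * (s2 x) + ((-1):ℂ) * li * lj * (Complex.exp (u x)) * (p1 x) * (s1 x) * (q2 x) * (s2 x) + (1:ℂ) * li * lj * (Complex.exp (u x)) * (p1 x) * (s1 x) * (p2 x) * (r2 x) + (1:ℂ) * li *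 lj * (Complex.exp (u x)) * (p1 x) * (r1 x) * (p2 x) * (s2 x) + (1:ℂ) * li * li * (Complex.exp (u x)) * (p1 x) * (s1 x) * (q2 x) * (s2 x) + ((-1):ℂ) * li * li * (Complex.exp (u x)) * (p1 x) * (s1 x) * (p2 x) * (r2 x)) * h3
end

section
/- Let p > 0, let u be a solution of sinh-Gordon with Cauchy data (u, u_y) of period p, and let (λ_i, μ_i), (λ_j, μ_j) be two distinct simple divisor points. Let φ(λ) solve the x- and y-system \eqref{eq_ode_phi} with φ(λ)(0) = (0,1)ᵗ. Define a_k = ((φ₁φ₂)(λ_k), ∂_y(φ₁φ₂)(λ_k)) as a pair of functions on [0,p]. Then Ω(a_i, a_j) := ∫₀ᵖ [(φ₁φ₂)(λ_i)·∂_y(φ₁φ₂)(λ_j) - (φ₁φ₂)(λ_j)·∂_y(φ₁φ₂)(λ_i)] dx = 0. -/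
open Complex intervalIntegral

/-- For Cauchy data `(u, u_y)` of period `p > 0` of a sinh-Gordon
solution and two distinct simple divisor points `(λᵢ, μᵢ)`, `(λⱼ, μⱼ)`, let `φ(λ_k)`
solve the Lax system \eqref{eq_ode_phi} with `φ(λ_k)(0) = (0,1)ᵗ`; at the divisor
points `φ(λ_k)(p) = μ_k⁻¹ φ(λ_k)(0)`. With
`a_k = ((φ₁φ₂)(λ_k), ∂_y(φ₁φ₂)(λ_k))` one has
`Ω(aᵢ, aⱼ) = ∫₀ᵖ [(φ₁φ₂)(λᵢ)∂_y(φ₁φ₂)(λⱼ) - (φ₁φ₂)(λⱼ)∂_y(φ₁φ₂)(λᵢ)] dx = 0`. -/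
theorem Omega_a_a_eq_zero (p : ℝ) (hp : 0 < p)
    (u uy : ℝ → ℂ) (hu : Continuous u) (huy : Continuous uy)
    (hu_per : ∀ x, u (x + p) = u x) (huy_per : ∀ x, uy (x + p) = uy x)
    (li lj mui muj : ℂ) (hli : li ≠ 0) (hlj : lj ≠ 0) (hmui : mui ≠ 0) (hmuj : muj ≠ 0)
    (hij : (li, mui) ≠ (lj, muj)) (hllij : li ≠ lj)
    (p1 q1 p2 q2 : ℝ → ℂ)
    -- φ(λᵢ) = (p1, q1) solves the x-system at λ = λᵢ
    (hp1 : ∀ x, HasDerivAt p1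
      (-(1/2) * ((-I * uy x) * p1 x + (I * li⁻¹ * exp (u x) + I * exp (-u x)) * q1 x)) x)
    (hq1 : ∀ x, HasDerivAt q1
      (-(1/2) * ((I * li * exp (u x) + I * exp (-u x)) * p1 x + (I * uy x) * q1 x)) x)
    -- φ(λⱼ) = (p2, q2) solves the x-system at λ = λⱼ
    (hp2 : ∀ x, HasDerivAt p2
      (-(1/2) * ((-I * uy x) * p2 x + (I * lj⁻¹ * exp (u x) + I * exp (-u x)) * q2 x)) x)
    (hq2 : ∀ x, HasDerivAt q2
      (-(1/2) * ((I * lj * exp (u x) + I * exp (-u x)) * p2 x + (I * uy x) * q2 x)) x)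
    -- initial conditions φ(λ_k)(0) = (0,1)ᵗ
    (hp10 : p1 0 = 0) (hq10 : q1 0 = 1) (hp20 : p2 0 = 0) (hq20 : q2 0 = 1)
    -- divisor-point conditions: φ(λ_k)(p) = μ_k⁻¹ φ(λ_k)(0)
    (hp1p : p1 p = mui⁻¹ * p1 0) (hq1p : q1 p = mui⁻¹ * q1 0)
    (hp2p : p2 p = muj⁻¹ * p2 0) (hq2p : q2 p = muj⁻¹ * q2 0)
    -- ∂_y(φ₁φ₂) at λᵢ and λⱼ from the y-part of the Lax system
    (Dyi Dyj : ℝ → ℂ)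
    (hDyi : Dyi = fun x => (1/2) * ((-li * exp (u x) + exp (-u x)) * p1 x ^ 2 +
      (li⁻¹ * exp (u x) - exp (-u x)) * q1 x ^ 2))
    (hDyj : Dyj = fun x => (1/2) * ((-lj * exp (u x) + exp (-u x)) * p2 x ^ 2 +
      (lj⁻¹ * exp (u x) - exp (-u x)) * q2 x ^ 2)) :
    ∫ x in (0:ℝ)..p, ((p1 x * q1 x) * Dyj x - (p2 x * q2 x) * Dyi x) = 0 := by
  have hsub : lj - li ≠ 0 := sub_ne_zero.mpr (Ne.symm hllij)
  set F : ℝ → ℂ := fun x => I / (lj - li) *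
    ((li * p1 x * q2 x - lj * p2 x * q1 x) * (p1 x * q2 x - p2 x * q1 x)) with hFdef
  have hderiv : ∀ x ∈ Set.uIcc (0:ℝ) p, HasDerivAt F
      ((p1 x * q1 x) * Dyj x - (p2 x * q2 x) * Dyi x) x := by
    intro x _
    have hd : HasDerivAt F (I / (lj - li) *
        ((li * (-(1/2) * ((-I * uy x) * p1 x + (I * li⁻¹ * exp (u x) + I * exp (-u x)) * q1 x)) * q2 x
            + li * p1 x * (-(1/2) * ((I * lj * exp (u x) + I * exp (-u x)) * p2 x + (I * uy x) * q2 x))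
          - (lj * (-(1/2) * ((-I * uy x) * p2 x + (I * lj⁻¹ * exp (u x) + I * exp (-u x)) * q2 x)) * q1 x
            + lj * p2 x * (-(1/2) * ((I * li * exp (u x) + I * exp (-u x)) * p1 x + (I * uy x) * q1 x))))
          * (p1 x * q2 x - p2 x * q1 x)
        + (li * p1 x * q2 x - lj * p2 x * q1 x) *
          ((-(1/2) * ((-I * uy x) * p1 x + (I * li⁻¹ * exp (u x) + I * exp (-u x)) * q1 x)) * q2 x
            + p1 x * (-(1/2) * ((I * lj * exp (u x) + I * exp (-u x)) * p2 x + (I * uy x) * q2 x))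
          - ((-(1/2) * ((-I * uy x) * p2 x + (I * lj⁻¹ * exp (u x) + I * exp (-u x)) * q2 x)) * q1 x
            + p2 x * (-(1/2) * ((I * li * exp (u x) + I * exp (-u x)) * p1 x + (I * uy x) * q1 x)))))) x := by
      exact (((((hp1 x).const_mul li).mul (hq2 x)).sub
        (((hp2 x).const_mul lj).mul (hq1 x))).mul
        (((hp1 x).mul (hq2 x)).sub ((hp2 x).mul (hq1 x)))).const_mul _
    convert hd using 1
    subst hDyi hDyj
    simp only
    rw [eq_comm, div_mul_eq_mul_div, div_eq_iff hsub]
    have h1 : li⁻¹ * li = 1 := inv_mul_cancel₀ hli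
    have h2 : lj⁻¹ * lj = 1 := inv_mul_cancel₀ hlj
    have hII : (I : ℂ) * I = -1 := Complex.I_mul_I
    linear_combination (exp (u x) * q1 x * q2 x * (p1 x * q2 x - p2 x * q1 x)) * h1 -
      (exp (u x) * q1 x * q2 x * (p1 x * q2 x - p2 x * q1 x)) * h2 +
      (-(((p1 x * q1 x) * ((1/2) * ((-lj * exp (u x) + exp (-u x)) * p2 x ^ 2 +
            (lj⁻¹ * exp (u x) - exp (-u x)) * q2 x ^ 2)) -
          (p2 x * q2 x) * ((1/2) * ((-li * exp (u x) + exp (-u x)) * p1 x ^ 2 +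
            (li⁻¹ * exp (u x) - exp (-u x)) * q1 x ^ 2))) * (lj - li)) -
        (exp (u x) * q1 x * q2 x * (p1 x * q2 x - p2 x * q1 x)) * (li⁻¹ * li - 1) +
        (exp (u x) * q1 x * q2 x * (p1 x * q2 x - p2 x * q1 x)) * (lj⁻¹ * lj - 1)) * hII
  have hcont : ContinuousOn (fun x => (p1 x * q1 x) * Dyj x - (p2 x * q2 x) * Dyi x)
      (Set.uIcc (0:ℝ) p) := by
    have c1 : Continuous p1 := Differentiable.continuous (fun x => (hp1 x).differentiableAt)
    have c2 : Continuous q1 := Differentiable.continuous (fun x => (hq1 x).differentiableAt)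
    have c3 : Continuous p2 := Differentiable.continuous (fun x => (hp2 x).differentiableAt)
    have c4 : Continuous q2 := Differentiable.continuous (fun x => (hq2 x).differentiableAt)
    subst hDyi hDyj
    apply Continuous.continuousOn
    fun_prop
  rw [intervalIntegral.integral_eq_sub_of_hasDerivAt hderiv hcont.intervalIntegrable]
  simp [hFdef, hp1p, hp10, hp2p, hp20]
end

section
/- With the hypotheses of the previous statement and additionally ψ(λ) solving \eqref{eq_ode_psi} with ψ(λ)(0) = (0,1)ᵗ, set b_k = (ω(λ_k), ∂_y ω(λ_k)) where ω = ψ₁φ₁ - ψ₂φ₂. Then for i ≠ j, Ω(a_i, b_j) = ∫₀ᵖ [(φ₁φ₂)(λ_i)·∂_y ω(λ_j) - ω(λ_j)·∂_y(φ₁φ₂)(λ_i)] dx = 0, and Ω(b_i, b_j) = ∫₀ᵖ [ω(λ_i)·∂_y ω(λ_j) - ω(λ_j)·∂_y ω(λ_i)] dx = 0. -/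
open Complex intervalIntegral

set_option maxHeartbeats 1000000 in
lemma alg1 (a b A B C D R S E1 E2 w dA dB dC dD dR dS : ℂ) (ha : a ≠ 0) (hb : b ≠ 0)
    (hdA : dA = -(1/2) * ((-I * w) * A + (I * a⁻¹ * E1 + I * E2) * B))
    (hdB : dB = -(1/2) * ((I * a * E1 + I * E2) * A + (I * w) * B))
    (hdC : dC = -(1/2) * ((-I * w) * C + (I * b⁻¹ * E1 + I * E2) * D))
    (hdD : dD = -(1/2) * ((I * b * E1 + I * E2) * C + (I * w) * D))
    (hdR : dR = (1/2) * ((-I * w) * R + (I * b * E1 + I * E2) * S))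
    (hdS : dS = (1/2) * ((I * b⁻¹ * E1 + I * E2) * R + (I * w) * S)) :
    (b - a) * ((A * B) * ((b * E1 - E2) * C * S + (b⁻¹ * E1 - E2) * R * D) -
      (R * C - S * D) * ((1/2) * ((-a * E1 + E2) * A ^ 2 + (a⁻¹ * E1 - E2) * B ^ 2))) =
    I * (2*a*(((dA*A + A*dA)*D + A*A*dD)*R + A*A*D*dR)
      - (a+b)*(((dA*B + A*dB)*C + A*B*dC)*R + A*B*C*dR)
      + (a+b)*(((dA*B + A*dB)*D + A*B*dD)*S + A*B*D*dS)
      - 2*b*(((dB*B + B*dB)*C + B*B*dC)*S + B*B*C*dS)) := by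
  subst hdA hdB hdC hdD hdR hdS
  set ai := a⁻¹ with hai'
  set bi := b⁻¹ with hbi'
  have hai : a * ai = 1 := mul_inv_cancel₀ ha
  have hbi : b * bi = 1 := mul_inv_cancel₀ hb
  have hI : (I:ℂ)^2 = -1 := Complex.I_sq
  linear_combination (((-1)*B^2*D*S*E1 + (1)*B^2*C*R*E1 + (-2)*A*B*D*R*E1 : ℂ)) * hai + (((1)*B^2*D*S*E1 + (-1)*B^2*C*R*E1 + (2)*A*B*D*R*E1 : ℂ)) * hbi + (((-1/2)*B^2*D*S*E2*b + (1/2)*B^2*D*S*E2*a + (-1)*B^2*D*S*E1*b*bi + (1/2)*B^2*D*S*E1*b*ai + (1/2)*B^2*D*S*E1*a*ai + (1/2)*B^2*C*R*E2*b + (-1/2)*B^2*C*R*E2*a + (1)*B^2*C*R*E1*b*bi + (-1/2)*B^2*C*R*E1*b*ai + (-1/2)*B^2*C*R*E1*a*ai + (-1)*A*B*D*R*E2*b + (1)*A*B*D*R*E2*a + (-1)*A*B*D*R*E1*b*bi + (-1)*A*B*D*R*E1*a*bi + (2)*A*B*D*R*E1*a*ai + (-1)*A*B*C*S*E2*b +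 (1)*A*B*C*S*E2*a + (1)*A*B*C*S*E1*b^2 + (-1)*A*B*C*S*E1*a*b + (1/2)*A^2*D*S*E2*b + (-1/2)*A^2*D*S*E2*a + (-1/2)*A^2*D*S*E1*a*b + (1/2)*A^2*D*S*E1*a^2 + (-1/2)*A^2*C*R*E2*b + (1/2)*A^2*C*R*E2*a + (1/2)*A^2*C*R*E1*a*b + (-1/2)*A^2*C*R*E1*a^2 : ℂ)) * hI

set_option maxHeartbeats 1000000 in
lemma alg2 (a b A B C D R S G H E1 E2 w dA dB dC dD dR dS dG dH : ℂ) (ha : a ≠ 0) (hb : b ≠ 0)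
    (hdA : dA = -(1/2) * ((-I * w) * A + (I * a⁻¹ * E1 + I * E2) * B))
    (hdB : dB = -(1/2) * ((I * a * E1 + I * E2) * A + (I * w) * B))
    (hdG : dG = (1/2) * ((-I * w) * G + (I * a * E1 + I * E2) * H))
    (hdH : dH = (1/2) * ((I * a⁻¹ * E1 + I * E2) * G + (I * w) * H))
    (hdC : dC = -(1/2) * ((-I * w) * C + (I * b⁻¹ * E1 + I * E2) * D))
    (hdD : dD = -(1/2) * ((I * b * E1 + I * E2) * C + (I * w) * D))
    (hdR : dR = (1/2) * ((-I * w) * R + (I * b * E1 + I * E2) * S))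
    (hdS : dS = (1/2) * ((I * b⁻¹ * E1 + I * E2) * R + (I * w) * S)) :
    (b - a) * ((G * A - H * B) * ((b * E1 - E2) * C * S + (b⁻¹ * E1 - E2) * R * D) -
      (R * C - S * D) * ((a * E1 - E2) * A * H + (a⁻¹ * E1 - E2) * G * B)) =
    2*I * ((a+b)*(((dA*G + A*dG)*D + A*G*dD)*S + A*G*D*dS)
      - 2*a*(((dA*H + A*dH)*D + A*H*dD)*R + A*H*D*dR)
      - 2*b*(((dB*G + B*dG)*C + B*G*dC)*S + B*G*C*dS)
      + (a+b)*(((dB*H + B*dH)*C + B*H*dC)*R + B*H*C*dR)) := by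
  subst hdA hdB hdC hdD hdR hdS hdG hdH
  set ai := a⁻¹ with hai'
  set bi := b⁻¹ with hbi'
  have hai : a * ai = 1 := mul_inv_cancel₀ ha
  have hbi : b * bi = 1 := mul_inv_cancel₀ hb
  have hI : (I:ℂ)^2 = -1 := Complex.I_sq
  linear_combination (((-2)*B*D*S*G*E1 + (2)*B*D*R*H*E1 + (2)*B*C*R*G*E1 + (-2)*A*D*R*G*E1 : ℂ)) * hai + (((2)*B*D*S*G*E1 + (-2)*B*D*R*H*E1 + (-2)*B*C*R*G*E1 + (2)*A*D*R*G*E1 : ℂ)) * hbi + (((-1)*B*D*S*G*E2*b + (1)*B*D*S*G*E2*a + (-2)*B*D*S*G*E1*b*bi + (1)*B*D*S*G*E1*b*ai + (1)*B*D*S*G*E1*a*ai + (1)*B*D*R*H*E2*b + (-1)*B*D*R*H*E2*a + (1)*B*D*R*H*E1*b*bi + (1)*B*D*R*H*E1*a*bi + (-2)*B*D*R*H*E1*a*ai + (1)*B*C*S*H*E2*b + (-1)*B*C*S*H*E2*a + (-1)*B*C*S*H*E1*b^2 + (1)*B*C*S*H*E1*a*b + (1)*B*C*R*G*E2*b + (-1)*B*C*R*G*E2*a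 + (2)*B*C*R*G*E1*b*bi + (-1)*B*C*R*G*E1*b*ai + (-1)*B*C*R*G*E1*a*ai + (-1)*A*D*S*H*E2*b + (1)*A*D*S*H*E2*a + (1)*A*D*S*H*E1*a*b + (-1)*A*D*S*H*E1*a^2 + (-1)*A*D*R*G*E2*b + (1)*A*D*R*G*E2*a + (-1)*A*D*R*G*E1*b*bi + (-1)*A*D*R*G*E1*a*bi + (2)*A*D*R*G*E1*a*ai + (-1)*A*C*S*G*E2*b + (1)*A*C*S*G*E2*a + (1)*A*C*S*G*E1*b^2 + (-1)*A*C*S*G*E1*a*b + (1)*A*C*R*H*E2*b + (-1)*A*C*R*H*E2*a + (-1)*A*C*R*H*E1*a*b + (1)*A*C*R*H*E1*a^2 : ℂ)) * hI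



set_option maxHeartbeats 2000000 in
/-- With the setup of the previous statement and additionally
`ψ(λ_k)` solving \eqref{eq_ode_psi} with `ψ(λ_k)(0) = (0,1)ᵗ`, set
`b_k = (ω(λ_k), ∂_yω(λ_k))` where `ω = ψ₁φ₁ - ψ₂φ₂`; at divisor points
`φ₁(λ_k)(0) = φ₁(λ_k)(p) = 0` and `ω(λ_k)(0) = ω(λ_k)(p) = -1`. Then for `i ≠ j`
`Ω(aᵢ, bⱼ) = 0` and `Ω(bᵢ, bⱼ) = 0`. -/
theorem Omega_a_b_and_b_b_eq_zero (p : ℝ) (hp : 0 < p)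
    (u uy : ℝ → ℂ) (hu : Continuous u) (huy : Continuous uy)
    (hu_per : ∀ x, u (x + p) = u x) (huy_per : ∀ x, uy (x + p) = uy x)
    (li lj mui muj : ℂ) (hli : li ≠ 0) (hlj : lj ≠ 0) (hmui : mui ≠ 0) (hmuj : muj ≠ 0)
    (hij : (li, mui) ≠ (lj, muj)) (hllij : li ≠ lj)
    (p1 q1 p2 q2 r1 s1 r2 s2 : ℝ → ℂ)
    -- φ(λᵢ) = (p1, q1), ψ(λᵢ) = (r1, s1) solve the x-systems at λ = λᵢ
    (hp1 : ∀ x, HasDerivAt p1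
      (-(1/2) * ((-I * uy x) * p1 x + (I * li⁻¹ * exp (u x) + I * exp (-u x)) * q1 x)) x)
    (hq1 : ∀ x, HasDerivAt q1
      (-(1/2) * ((I * li * exp (u x) + I * exp (-u x)) * p1 x + (I * uy x) * q1 x)) x)
    (hr1 : ∀ x, HasDerivAt r1
      ((1/2) * ((-I * uy x) * r1 x + (I * li * exp (u x) + I * exp (-u x)) * s1 x)) x)
    (hs1 : ∀ x, HasDerivAt s1
      ((1/2) * ((I * li⁻¹ * exp (u x) + I * exp (-u x)) * r1 x + (I * uy x) * s1 x)) x)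
    -- φ(λⱼ) = (p2, q2), ψ(λⱼ) = (r2, s2) solve the x-systems at λ = λⱼ
    (hp2 : ∀ x, HasDerivAt p2
      (-(1/2) * ((-I * uy x) * p2 x + (I * lj⁻¹ * exp (u x) + I * exp (-u x)) * q2 x)) x)
    (hq2 : ∀ x, HasDerivAt q2
      (-(1/2) * ((I * lj * exp (u x) + I * exp (-u x)) * p2 x + (I * uy x) * q2 x)) x)
    (hr2 : ∀ x, HasDerivAt r2
      ((1/2) * ((-I * uy x) * r2 x + (I * lj * exp (u x) + I * exp (-u x)) * s2 x)) x)
    (hs2 : ∀ x, HasDerivAt s2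
      ((1/2) * ((I * lj⁻¹ * exp (u x) + I * exp (-u x)) * r2 x + (I * uy x) * s2 x)) x)
    -- initial conditions φ(λ_k)(0) = ψ(λ_k)(0) = (0,1)ᵗ
    (hp10 : p1 0 = 0) (hq10 : q1 0 = 1) (hp20 : p2 0 = 0) (hq20 : q2 0 = 1)
    (hr10 : r1 0 = 0) (hs10 : s1 0 = 1) (hr20 : r2 0 = 0) (hs20 : s2 0 = 1)
    -- divisor-point boundary values
    (hp1p : p1 p = 0) (hp2p : p2 p = 0)
    (omi omj Dyomi Dyomj Dyi Dyj : ℝ → ℂ)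
    (homi : omi = fun x => r1 x * p1 x - s1 x * q1 x)
    (homj : omj = fun x => r2 x * p2 x - s2 x * q2 x)
    (homi_p : omi p = -1) (homj_p : omj p = -1)
    (hDyomi : Dyomi = fun x => (li * exp (u x) - exp (-u x)) * p1 x * s1 x +
      (li⁻¹ * exp (u x) - exp (-u x)) * r1 x * q1 x)
    (hDyomj : Dyomj = fun x => (lj * exp (u x) - exp (-u x)) * p2 x * s2 x +
      (lj⁻¹ * exp (u x) - exp (-u x)) * r2 x * q2 x)
    (hDyi : Dyi = fun x => (1/2) * ((-li * exp (u x) + exp (-u x)) * p1 x ^ 2 +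
      (li⁻¹ * exp (u x) - exp (-u x)) * q1 x ^ 2))
    (hDyj : Dyj = fun x => (1/2) * ((-lj * exp (u x) + exp (-u x)) * p2 x ^ 2 +
      (lj⁻¹ * exp (u x) - exp (-u x)) * q2 x ^ 2)) :
    (∫ x in (0:ℝ)..p, ((p1 x * q1 x) * Dyomj x - omj x * Dyi x)) = 0 ∧
    (∫ x in (0:ℝ)..p, (omi x * Dyomj x - omj x * Dyomi x)) = 0 := by
  subst homi homj hDyomi hDyomj hDyi hDyj
  have hd : lj - li ≠ 0 := sub_ne_zero.2 (Ne.symm hllij)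
  have cp1 : Continuous p1 := continuous_iff_continuousAt.2 fun x => (hp1 x).continuousAt
  have cq1 : Continuous q1 := continuous_iff_continuousAt.2 fun x => (hq1 x).continuousAt
  have cr1 : Continuous r1 := continuous_iff_continuousAt.2 fun x => (hr1 x).continuousAt
  have cs1 : Continuous s1 := continuous_iff_continuousAt.2 fun x => (hs1 x).continuousAt
  have cp2 : Continuous p2 := continuous_iff_continuousAt.2 fun x => (hp2 x).continuousAt
  have cq2 : Continuous q2 := continuous_iff_continuousAt.2 fun x => (hq2 x).continuousAt
  have cr2 : Continuous r2 := continuous_iff_continuousAt.2 fun x => (hr2 x).continuousAt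
  have cs2 : Continuous s2 := continuous_iff_continuousAt.2 fun x => (hs2 x).continuousAt
  have cE : Continuous fun x => exp (u x) := hu.cexp
  have cEm : Continuous fun x => exp (-u x) := hu.neg.cexp
  constructor
  · set f : ℝ → ℂ := fun x =>
      (p1 x * q1 x) * ((lj * exp (u x) - exp (-u x)) * p2 x * s2 x +
          (lj⁻¹ * exp (u x) - exp (-u x)) * r2 x * q2 x) -
        (r2 x * p2 x - s2 x * q2 x) * ((1/2) * ((-li * exp (u x) + exp (-u x)) * p1 x ^ 2 +
          (li⁻¹ * exp (u x) - exp (-u x)) * q1 x ^ 2)) with hf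
    have key : ∀ x : ℝ, HasDerivAt
        (fun x => I * (2*li*(p1 x*p1 x*q2 x*r2 x) - (li+lj)*(p1 x*q1 x*p2 x*r2 x)
          + (li+lj)*(p1 x*q1 x*q2 x*s2 x) - 2*lj*(q1 x*q1 x*p2 x*s2 x)))
        ((lj - li) * f x) x := by
      intro x
      have H1 := (((hp1 x).mul (hp1 x)).mul (hq2 x)).mul (hr2 x)
      have H2 := (((hp1 x).mul (hq1 x)).mul (hp2 x)).mul (hr2 x)
      have H3 := (((hp1 x).mul (hq1 x)).mul (hq2 x)).mul (hs2 x)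
      have H4 := (((hq1 x).mul (hq1 x)).mul (hp2 x)).mul (hs2 x)
      have H := ((((H1.const_mul (2*li)).sub (H2.const_mul (li+lj))).add
        (H3.const_mul (li+lj))).sub (H4.const_mul (2*lj))).const_mul I
      exact H.congr_deriv (alg1 li lj (p1 x) (q1 x) (p2 x) (q2 x) (r2 x) (s2 x) (exp (u x)) (exp (-u x))
        (uy x) _ _ _ _ _ _ hli hlj rfl rfl rfl rfl rfl rfl).symm
    have hcf : Continuous f := by rw [hf]; fun_prop
    have hint : IntervalIntegrable (fun x => (lj - li) * f x) MeasureTheory.volume 0 p :=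
      (continuous_const.mul hcf).intervalIntegrable 0 p
    have h2 := intervalIntegral.integral_eq_sub_of_hasDerivAt (fun x _ => key x) hint
    rw [intervalIntegral.integral_const_mul] at h2
    have h3 : (lj - li) * ∫ x in (0:ℝ)..p, f x = 0 := by
      rw [h2]; simp only [hp1p, hp2p, hp10, hp20]; ring
    have := (mul_eq_zero.1 h3).resolve_left hd
    simpa [hf] using this
  · set f : ℝ → ℂ := fun x =>
      (r1 x * p1 x - s1 x * q1 x) * ((lj * exp (u x) - exp (-u x)) * p2 x * s2 x +
          (lj⁻¹ * exp (u x) - exp (-u x)) * r2 x * q2 x) -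
        (r2 x * p2 x - s2 x * q2 x) * ((li * exp (u x) - exp (-u x)) * p1 x * s1 x +
          (li⁻¹ * exp (u x) - exp (-u x)) * r1 x * q1 x) with hf
    have key : ∀ x : ℝ, HasDerivAt
        (fun x => 2*I * ((li+lj)*(p1 x*r1 x*q2 x*s2 x) - 2*li*(p1 x*s1 x*q2 x*r2 x)
          - 2*lj*(q1 x*r1 x*p2 x*s2 x) + (li+lj)*(q1 x*s1 x*p2 x*r2 x)))
        ((lj - li) * f x) x := by
      intro x
      have H1 := (((hp1 x).mul (hr1 x)).mul (hq2 x)).mul (hs2 x)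
      have H2 := (((hp1 x).mul (hs1 x)).mul (hq2 x)).mul (hr2 x)
      have H3 := (((hq1 x).mul (hr1 x)).mul (hp2 x)).mul (hs2 x)
      have H4 := (((hq1 x).mul (hs1 x)).mul (hp2 x)).mul (hr2 x)
      have H := ((((H1.const_mul (li+lj)).sub (H2.const_mul (2*li))).sub
        (H3.const_mul (2*lj))).add (H4.const_mul (li+lj))).const_mul (2*I)
      exact H.congr_deriv (alg2 li lj (p1 x) (q1 x) (p2 x) (q2 x) (r2 x) (s2 x) (r1 x) (s1 x) (exp (u x))
        (exp (-u x)) (uy x) _ _ _ _ _ _ _ _ hli hlj rfl rfl rfl rfl rfl rfl rfl rfl).symm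
    have hcf : Continuous f := by rw [hf]; fun_prop
    have hint : IntervalIntegrable (fun x => (lj - li) * f x) MeasureTheory.volume 0 p :=
      (continuous_const.mul hcf).intervalIntegrable 0 p
    have h2 := intervalIntegral.integral_eq_sub_of_hasDerivAt (fun x _ => key x) hint
    rw [intervalIntegral.integral_const_mul] at h2
    have h3 : (lj - li) * ∫ x in (0:ℝ)..p, f x = 0 := by
      rw [h2]; simp only [hp1p, hp2p, hp10, hp20]; ring
    have := (mul_eq_zero.1 h3).resolve_left hd
    simpa [hf] using this
end

section
/- With the same setup, for i = j one has Ω(a_i, b_i) = κ_i where κ_i := ∫₀ᵖ (λ_i φ₁²(λ_i) e^u + λ_i⁻¹ φ₂²(λ_i) e^u) dx. That is, ∫₀ᵖ [(φ₁φ₂)(λ_i)·∂_y ω(λ_i) - ω(λ_i)·∂_y(φ₁φ₂)(λ_i)] dx = ∫₀ᵖ (λ_i φ₁²(λ_i) + λ_i⁻¹ φ₂²(λ_i)) e^u dx. -/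
open Complex intervalIntegral

/-- In the diagonal case `i = j` one has `Ω(aᵢ, bᵢ) = κᵢ`, i.e.
`∫₀ᵖ [(φ₁φ₂)(λᵢ)∂_yω(λᵢ) - ω(λᵢ)∂_y(φ₁φ₂)(λᵢ)] dx
  = ∫₀ᵖ (λᵢφ₁²(λᵢ) + λᵢ⁻¹φ₂²(λᵢ)) e^u dx`,
where `φ(λᵢ)` solves \eqref{eq_ode_phi} and `ψ(λᵢ)` solves \eqref{eq_ode_psi} with
`φ(0) = ψ(0) = (0,1)ᵗ` and `φ₁(λᵢ)(p) = 0` at the divisor point. -/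
theorem Omega_a_b_diagonal (p : ℝ) (hp : 0 < p)
    (u uy : ℝ → ℂ) (hu : Continuous u) (huy : Continuous uy)
    (hu_per : ∀ x, u (x + p) = u x) (huy_per : ∀ x, uy (x + p) = uy x)
    (li mui : ℂ) (hli : li ≠ 0) (hmui : mui ≠ 0)
    (phi1 phi2 psi1 psi2 : ℝ → ℂ)
    (hphi1 : ∀ x, HasDerivAt phi1
      (-(1/2) * ((-I * uy x) * phi1 x +
        (I * li⁻¹ * exp (u x) + I * exp (-u x)) * phi2 x)) x)
    (hphi2 : ∀ x, HasDerivAt phi2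
      (-(1/2) * ((I * li * exp (u x) + I * exp (-u x)) * phi1 x +
        (I * uy x) * phi2 x)) x)
    (hpsi1 : ∀ x, HasDerivAt psi1
      ((1/2) * ((-I * uy x) * psi1 x +
        (I * li * exp (u x) + I * exp (-u x)) * psi2 x)) x)
    (hpsi2 : ∀ x, HasDerivAt psi2
      ((1/2) * ((I * li⁻¹ * exp (u x) + I * exp (-u x)) * psi1 x +
        (I * uy x) * psi2 x)) x)
    -- initial conditions φ(0) = ψ(0) = (0,1)ᵗ
    (hphi10 : phi1 0 = 0) (hphi20 : phi2 0 = 1) (hpsi10 : psi1 0 = 0) (hpsi20 : psi2 0 = 1)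
    -- divisor-point boundary value
    (hphi1p : phi1 p = 0)
    (om Dyom Dy : ℝ → ℂ)
    (hom : om = fun x => psi1 x * phi1 x - psi2 x * phi2 x)
    (hDyom : Dyom = fun x => (li * exp (u x) - exp (-u x)) * phi1 x * psi2 x +
      (li⁻¹ * exp (u x) - exp (-u x)) * psi1 x * phi2 x)
    (hDy : Dy = fun x => (1/2) * ((-li * exp (u x) + exp (-u x)) * phi1 x ^ 2 +
      (li⁻¹ * exp (u x) - exp (-u x)) * phi2 x ^ 2)) :
    (∫ x in (0:ℝ)..p, ((phi1 x * phi2 x) * Dyom x - om x * Dy x)) =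
      ∫ x in (0:ℝ)..p, (li * phi1 x ^ 2 + li⁻¹ * phi2 x ^ 2) * exp (u x) := by
  subst hom hDyom hDy
  -- continuity of the solutions
  have cphi1 : Continuous phi1 := continuous_iff_continuousAt.2 fun x => (hphi1 x).continuousAt
  have cphi2 : Continuous phi2 := continuous_iff_continuousAt.2 fun x => (hphi2 x).continuousAt
  have cpsi1 : Continuous psi1 := continuous_iff_continuousAt.2 fun x => (hpsi1 x).continuousAt
  have cpsi2 : Continuous psi2 := continuous_iff_continuousAt.2 fun x => (hpsi2 x).continuousAt
  have cE : Continuous fun x => exp (u x) := Complex.continuous_exp.comp hu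
  have cF : Continuous fun x => exp (-u x) := Complex.continuous_exp.comp hu.neg
  -- the invariant ψ₁φ₁ + ψ₂φ₂ ≡ 1
  have hWder : ∀ x, HasDerivAt (fun x => psi1 x * phi1 x + psi2 x * phi2 x) 0 x := by
    intro x
    have h := ((hpsi1 x).mul (hphi1 x)).add ((hpsi2 x).mul (hphi2 x))
    refine h.congr_deriv (Eq.symm ?_)
    ring
  have hinv : ∀ x, psi1 x * phi1 x + psi2 x * phi2 x = 1 := by
    intro x
    have h := is_const_of_deriv_eq_zero (f := fun x => psi1 x * phi1 x + psi2 x * phi2 x)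
      (fun y => (hWder y).differentiableAt) (fun y => (hWder y).deriv) x 0
    simpa [hphi10, hphi20, hpsi10, hpsi20] using h
  -- the antiderivative
  set G : ℝ → ℂ := fun x =>
    -I * (phi1 x * phi1 x * phi2 x * psi1 x + phi1 x * phi2 x * phi2 x * psi2 x) with hGdef
  have hGder : ∀ x, HasDerivAt G
      ((phi1 x * phi2 x) *
        ((li * exp (u x) - exp (-u x)) * phi1 x * psi2 x +
          (li⁻¹ * exp (u x) - exp (-u x)) * psi1 x * phi2 x) -
        (psi1 x * phi1 x - psi2 x * phi2 x) *
          ((1/2) * ((-li * exp (u x) + exp (-u x)) * phi1 x ^ 2 +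
            (li⁻¹ * exp (u x) - exp (-u x)) * phi2 x ^ 2)) -
        (li * phi1 x ^ 2 + li⁻¹ * phi2 x ^ 2) * exp (u x)) x := by
    intro x
    have h := (((((hphi1 x).mul (hphi1 x)).mul (hphi2 x)).mul (hpsi1 x)).add
      ((((hphi1 x).mul (hphi2 x)).mul (hphi2 x)).mul (hpsi2 x))).const_mul (-I)
    refine h.congr_deriv (Eq.symm ?_)
    simp only [Pi.mul_apply]
    have hIsq : I ^ 2 = -1 := Complex.I_sq
    linear_combination (Complex.exp (u x) * (li * phi1 x ^ 2 + li⁻¹ * phi2 x ^ 2)) * hinv x +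
      (-(1/2) * (phi1 x * phi2 x ^ 2 * psi1 x * (li⁻¹ * exp (u x) + exp (-u x)) +
        phi1 x ^ 3 * psi1 x * (li * exp (u x) + exp (-u x)) +
        phi1 x ^ 2 * phi2 x * psi2 x * (li * exp (u x) + exp (-u x)) +
        phi2 x ^ 3 * psi2 x * (li⁻¹ * exp (u x) + exp (-u x)))) * hIsq
  -- continuity / integrability of the two integrands
  have cL : Continuous fun x => (phi1 x * phi2 x) *
      ((li * exp (u x) - exp (-u x)) * phi1 x * psi2 x +
        (li⁻¹ * exp (u x) - exp (-u x)) * psi1 x * phi2 x) -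
      (psi1 x * phi1 x - psi2 x * phi2 x) *
        ((1/2) * ((-li * exp (u x) + exp (-u x)) * phi1 x ^ 2 +
          (li⁻¹ * exp (u x) - exp (-u x)) * phi2 x ^ 2)) := by fun_prop
  have cR : Continuous fun x => (li * phi1 x ^ 2 + li⁻¹ * phi2 x ^ 2) * exp (u x) := by fun_prop
  have hL : IntervalIntegrable (fun x => (phi1 x * phi2 x) *
      ((li * exp (u x) - exp (-u x)) * phi1 x * psi2 x +
        (li⁻¹ * exp (u x) - exp (-u x)) * psi1 x * phi2 x) -
      (psi1 x * phi1 x - psi2 x * phi2 x) *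
        ((1/2) * ((-li * exp (u x) + exp (-u x)) * phi1 x ^ 2 +
          (li⁻¹ * exp (u x) - exp (-u x)) * phi2 x ^ 2))) MeasureTheory.volume 0 p :=
    cL.intervalIntegrable 0 p
  have hR : IntervalIntegrable (fun x => (li * phi1 x ^ 2 + li⁻¹ * phi2 x ^ 2) * exp (u x))
      MeasureTheory.volume 0 p := cR.intervalIntegrable 0 p
  have hFTC : (∫ x in (0:ℝ)..p, ((phi1 x * phi2 x) *
      ((li * exp (u x) - exp (-u x)) * phi1 x * psi2 x +
        (li⁻¹ * exp (u x) - exp (-u x)) * psi1 x * phi2 x) -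
      (psi1 x * phi1 x - psi2 x * phi2 x) *
        ((1/2) * ((-li * exp (u x) + exp (-u x)) * phi1 x ^ 2 +
          (li⁻¹ * exp (u x) - exp (-u x)) * phi2 x ^ 2)) -
      (li * phi1 x ^ 2 + li⁻¹ * phi2 x ^ 2) * exp (u x))) = G p - G 0 := by
    refine intervalIntegral.integral_eq_sub_of_hasDerivAt (fun x _ => hGder x) ?_
    apply Continuous.intervalIntegrable
    fun_prop
  have hG0 : G 0 = 0 := by simp [hGdef, hphi10]
  have hGp : G p = 0 := by simp [hGdef, hphi1p]
  rw [hG0, hGp, sub_zero] at hFTC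
  rw [intervalIntegral.integral_sub hL hR] at hFTC
  exact sub_eq_zero.mp hFTC
end

section
/- Let (λ_i, μ_i) be a simple divisor point, and let δU_λ = (1/2)·[[-i δu_y, i λ⁻¹ e^u δu - i e^{-u} δu],[i λ e^u δu - i e^{-u} δu, i δu_y]] be the linearization of U_λ in the direction (δu, δu_y). Then the variation of the off-diagonal monodromy entry satisfies δb(λ_i) = -i μ_i · ∫₀ᵖ [(φ₁φ₂)(λ_i)·δu_y - ∂_y(φ₁φ₂)(λ_i)·δu] dx, where φ(λ_i) = F_{λ_i}⁻¹(0,1)ᵗ and ∂_y(φ₁φ₂)(λ_i) = (1/2)((-λ_i e^u + e^{-u})φ₁²(λ_i) + (λ_i⁻¹ e^u - e^{-u})φ₂²(λ_i)). -/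
open Complex Matrix intervalIntegral

attribute [local instance] Matrix.normedAddCommGroup Matrix.normedSpace

/-- At a simple divisor point `(λᵢ, μᵢ)` the variation of the
off-diagonal monodromy entry is
`δb(λᵢ) = -iμᵢ ∫₀ᵖ [(φ₁φ₂)(λᵢ)δu_y - ∂_y(φ₁φ₂)(λᵢ)δu] dx`,
where `δM_λ = (∫₀ᵖ F_λ δU_λ F_λ⁻¹ dx)·M_λ`, `φ(λᵢ) = F_{λᵢ}⁻¹(0,1)ᵗ` and
`∂_y(φ₁φ₂)(λᵢ) = (1/2)((-λᵢe^u + e^{-u})φ₁² + (λᵢ⁻¹e^u - e^{-u})φ₂²)`. -/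
theorem variation_of_b (p : ℝ) (hp : 0 < p)
    (u uy du duy : ℝ → ℂ) (hu : Continuous u) (huy : Continuous uy)
    (hdu : Continuous du) (hduy : Continuous duy)
    (li mui c : ℂ) (hli : li ≠ 0) (hmui : mui ≠ 0)
    (U dU : ℝ → Matrix (Fin 2) (Fin 2) ℂ)
    (hUdef : U = fun x => (1/2 : ℂ) •
      !![-I * uy x, I * li⁻¹ * exp (u x) + I * exp (-u x);
         I * li * exp (u x) + I * exp (-u x), I * uy x])
    (hdUdef : dU = fun x => (1/2 : ℂ) •
      !![-I * duy x, I * li⁻¹ * exp (u x) * du x - I * exp (-u x) * du x;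
         I * li * exp (u x) * du x - I * exp (-u x) * du x, I * duy x])
    (F : ℝ → Matrix (Fin 2) (Fin 2) ℂ)
    (hF : ∀ x, HasDerivAt F (F x * U x) x) (hF0 : F 0 = 1)
    (hdet : ∀ x, (F x).det = 1)
    -- divisor point: M_{λᵢ} = F p has the form [[1/μᵢ, 0],[c, μᵢ]]
    (hM : F p = !![1/mui, 0; c, mui])
    (dM : Matrix (Fin 2) (Fin 2) ℂ)
    (hdM : dM = (∫ x in (0:ℝ)..p, F x * dU x * (F x)⁻¹) * F p)
    (phi : ℝ → Fin 2 → ℂ) (hphi : phi = fun x => (F x)⁻¹.mulVec ![0, 1])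
    (Dy : ℝ → ℂ)
    (hDy : Dy = fun x => (1/2) * ((-li * exp (u x) + exp (-u x)) * (phi x 0) ^ 2 +
      (li⁻¹ * exp (u x) - exp (-u x)) * (phi x 1) ^ 2)) :
    dM 0 1 = -I * mui *
      ∫ x in (0:ℝ)..p, ((phi x 0 * phi x 1) * duy x - Dy x * du x) := by
  have hFc : Continuous F := continuous_iff_continuousAt.2 fun x => (hF x).continuousAt
  have hinv : ∀ x, (F x)⁻¹ = (F x).adjugate := by
    intro x
    rw [Matrix.inv_def, hdet]
    simp
  have hinvc : Continuous fun x => (F x)⁻¹ := by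
    simp only [hinv]; exact hFc.matrix_adjugate
  have hdUc : Continuous dU := by
    rw [hdUdef]
    apply Continuous.fun_const_smul
    apply continuous_matrix
    intro i j
    fin_cases i <;> fin_cases j <;> simp <;> fun_prop
  have hGc : Continuous fun x => F x * dU x * (F x)⁻¹ :=
    (hFc.matrix_mul hdUc).matrix_mul hinvc
  have hint := hGc.intervalIntegrable (μ := MeasureTheory.volume) 0 p
  let L : Matrix (Fin 2) (Fin 2) ℂ →L[ℂ] ℂ :=
    (ContinuousLinearMap.proj (R := ℂ) (φ := fun _ : Fin 2 => ℂ) 1).comp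
      (ContinuousLinearMap.proj (R := ℂ) (φ := fun _ : Fin 2 => Fin 2 → ℂ) 0)
  have hL : ∀ A : Matrix (Fin 2) (Fin 2) ℂ, L A = A 0 1 := fun A => rfl
  have hentry : (∫ x in (0:ℝ)..p, F x * dU x * (F x)⁻¹) 0 1
      = ∫ x in (0:ℝ)..p, (F x * dU x * (F x)⁻¹) 0 1 := by
    exact (L.intervalIntegral_comp_comm hint).symm
  have hpt : ∀ x, (F x * dU x * (F x)⁻¹) 0 1
      = -I * ((phi x 0 * phi x 1) * duy x - Dy x * du x) := by
    intro x
    have h1 : phi x 0 = -(F x 0 1) := by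
      simp [hphi, hinv, Matrix.adjugate_fin_two, Matrix.mulVec, dotProduct,
        Fin.sum_univ_two]
    have h2 : phi x 1 = F x 0 0 := by
      simp [hphi, hinv, Matrix.adjugate_fin_two, Matrix.mulVec, dotProduct,
        Fin.sum_univ_two]
    rw [hinv, Matrix.adjugate_fin_two]
    simp only [hDy, hdUdef, h1, h2, Matrix.mul_apply, Fin.sum_univ_two, Matrix.smul_apply,
      Matrix.cons_val', Matrix.cons_val_zero, Matrix.cons_val_one, Matrix.head_cons,
      Matrix.head_fin_const, Matrix.of_apply, Matrix.empty_val', Matrix.cons_val_fin_one,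
      smul_eq_mul]
    ring
  have hdm : dM 0 1 = (∫ x in (0:ℝ)..p, F x * dU x * (F x)⁻¹) 0 1 * mui := by
    rw [hdM, Matrix.mul_apply, Fin.sum_univ_two, hM]
    simp
  rw [hdm, hentry]
  simp only [hpt]
  rw [intervalIntegral.integral_const_mul]
  ring
end

section
/- Let (λ_i, μ_i) be a simple divisor point. Then the λ-derivative of the off-diagonal monodromy entry satisfies ∂_λ b(λ_i) = -i(μ_i/(2λ_i))·κ_i, where κ_i = ∫₀ᵖ (λ_i φ₁²(λ_i) + λ_i⁻¹ φ₂²(λ_i)) e^u dx. In particular, if the divisor point is simple (∂_λ b(λ_i) ≠ 0), then κ_i ≠ 0. -/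
open Complex Matrix intervalIntegral

attribute [local instance] Matrix.normedAddCommGroup Matrix.normedSpace

noncomputable def entryCLM (i j : Fin 2) : Matrix (Fin 2) (Fin 2) ℂ →L[ℂ] ℂ :=
  { toLinearMap := (LinearMap.proj j).comp
      (LinearMap.proj (R := ℂ) (φ := fun _ : Fin 2 => Fin 2 → ℂ) i),
    cont := (continuous_apply j).comp (continuous_apply i) }

noncomputable instance : ENormedAddMonoid (Matrix (Fin 2) (Fin 2) ℂ) :=
  inferInstanceAs (ENormedAddMonoid (Fin 2 → Fin 2 → ℂ))

lemma integral_entry {f : ℝ → Matrix (Fin 2) (Fin 2) ℂ} {a b : ℝ}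
    (hf : IntervalIntegrable f MeasureTheory.volume a b) (i j : Fin 2) :
    (∫ x in a..b, f x) i j = ∫ x in a..b, f x i j := by
  haveI : CompleteSpace (Matrix (Fin 2) (Fin 2) ℂ) := inferInstance
  exact ((entryCLM i j).intervalIntegral_comp_comm hf).symm

/-- At a simple divisor point `(λᵢ, μᵢ)` the `λ`-derivative of the
off-diagonal monodromy entry satisfies `∂_λ b(λᵢ) = -i(μᵢ/(2λᵢ))·κᵢ`, where
`κᵢ = ∫₀ᵖ (λᵢφ₁²(λᵢ) + λᵢ⁻¹φ₂²(λᵢ)) e^u dx`, with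
`∂_λ M_λ = (∫₀ᵖ F_λ ∂_λU_λ F_λ⁻¹ dx)·M_λ` and `∂_λ U_λ = (1/2)[[0, -iλ⁻²e^u],[ie^u, 0]]`.
In particular, simplicity `∂_λ b(λᵢ) ≠ 0` forces `κᵢ ≠ 0`. -/
theorem lambda_derivative_of_b (p : ℝ) (hp : 0 < p)
    (u uy : ℝ → ℂ) (hu : Continuous u) (huy : Continuous uy)
    (li mui c : ℂ) (hli : li ≠ 0) (hmui : mui ≠ 0)
    (U dlU : ℝ → Matrix (Fin 2) (Fin 2) ℂ)
    (hUdef : U = fun x => (1/2 : ℂ) •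
      !![-I * uy x, I * li⁻¹ * exp (u x) + I * exp (-u x);
         I * li * exp (u x) + I * exp (-u x), I * uy x])
    (hdlUdef : dlU = fun x => (1/2 : ℂ) •
      !![0, -I * li⁻¹ ^ 2 * exp (u x); I * exp (u x), 0])
    (F : ℝ → Matrix (Fin 2) (Fin 2) ℂ)
    (hF : ∀ x, HasDerivAt F (F x * U x) x) (hF0 : F 0 = 1)
    (hdet : ∀ x, (F x).det = 1)
    -- divisor point: M_{λᵢ} = F p has the form [[1/μᵢ, 0],[c, μᵢ]]
    (hM : F p = !![1/mui, 0; c, mui])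
    (dlM : Matrix (Fin 2) (Fin 2) ℂ)
    (hdlM : dlM = (∫ x in (0:ℝ)..p, F x * dlU x * (F x)⁻¹) * F p)
    (phi : ℝ → Fin 2 → ℂ) (hphi : phi = fun x => (F x)⁻¹.mulVec ![0, 1])
    (kappa : ℂ)
    (hkappa : kappa =
      ∫ x in (0:ℝ)..p, (li * (phi x 0) ^ 2 + li⁻¹ * (phi x 1) ^ 2) * exp (u x)) :
    dlM 0 1 = -I * (mui / (2 * li)) * kappa ∧ (dlM 0 1 ≠ 0 → kappa ≠ 0) := by
  haveI : CompleteSpace (Matrix (Fin 2) (Fin 2) ℂ) := inferInstance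
  have hFc : Continuous F :=
    continuous_iff_continuousAt.2 fun x => (hF x).continuousAt
  have hinv : ∀ x, (F x)⁻¹ = (F x).adjugate := fun x => by
    rw [Matrix.inv_def, hdet, Ring.inverse_one, one_smul]
  have hinvc : Continuous fun x => (F x)⁻¹ := by
    simp only [hinv]; exact hFc.matrix_adjugate
  have hdlUc : Continuous dlU := by
    rw [hdlUdef]
    refine (continuous_const (y := (1/2 : ℂ))).smul ?_
    refine continuous_matrix fun i j => ?_
    fin_cases i <;> fin_cases j <;>
      simp [Matrix.cons_val_zero, Matrix.cons_val_one] <;> fun_prop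
  have hGc : Continuous fun x => F x * dlU x * (F x)⁻¹ :=
    (hFc.matrix_mul hdlUc).matrix_mul hinvc
  have hGint : IntervalIntegrable (fun x => F x * dlU x * (F x)⁻¹)
      MeasureTheory.volume 0 p := hGc.intervalIntegrable 0 p
  -- pointwise identity for the entry
  have hentry : ∀ x, (F x * dlU x * (F x)⁻¹) 0 1
      = (-I / (2 * li)) * ((li * (phi x 0) ^ 2 + li⁻¹ * (phi x 1) ^ 2) * exp (u x)) := by
    intro x
    have h1 : (F x)⁻¹ = !![F x 1 1, -F x 0 1; -F x 1 0, F x 0 0] := by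
      rw [hinv, Matrix.adjugate_fin_two]
    have hp0 : phi x 0 = -F x 0 1 := by
      simp [hphi, h1, Matrix.mulVec, dotProduct, Fin.sum_univ_two]
    have hp1 : phi x 1 = F x 0 0 := by
      simp [hphi, h1, Matrix.mulVec, dotProduct, Fin.sum_univ_two]
    rw [hp0, hp1, hdlUdef, h1]
    simp only [Matrix.mul_apply, Fin.sum_univ_two, Matrix.smul_apply, smul_eq_mul]
    simp [Matrix.cons_val_zero, Matrix.cons_val_one]
    field_simp
    ring
  have hint01 : (∫ x in (0:ℝ)..p, F x * dlU x * (F x)⁻¹) 0 1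
      = (-I / (2 * li)) * kappa := by
    rw [integral_entry hGint 0 1, hkappa]
    rw [show (∫ x in (0:ℝ)..p, (F x * dlU x * (F x)⁻¹) 0 1)
        = ∫ x in (0:ℝ)..p, (-I / (2 * li)) * ((li * (phi x 0) ^ 2 + li⁻¹ * (phi x 1) ^ 2) * exp (u x)) from
      intervalIntegral.integral_congr fun x _ => hentry x]
    rw [intervalIntegral.integral_const_mul]
  have key : dlM 0 1 = -I * (mui / (2 * li)) * kappa := by
    have e01 : (!![1/mui, 0; c, mui] : Matrix (Fin 2) (Fin 2) ℂ) 0 1 = 0 := rfl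
    have e11 : (!![1/mui, 0; c, mui] : Matrix (Fin 2) (Fin 2) ℂ) 1 1 = mui := rfl
    rw [hdlM, Matrix.mul_apply, Fin.sum_univ_two, hM, e01, e11, hint01]
    ring
  exact ⟨key, fun h hk => h (by rw [key, hk, mul_zero])⟩
end
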